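/- Let F : ℝ → ℝ be the Cantor function extended by F(y) = y outside [0,1] (i.e. F is continuous, nondecreasing, constant on each complementary interval of the ternary Cantor set K, with F(0)=0, F(1)=1). Then F is differentiable with derivative 0 at every point of [0,1] \ K, and F is not differentiable at any point of K. -/

import Mathlib

open MeasureTheory

/-- The ternary Cantor set: reals of the form `∑ 2 aₙ / 3^(n+1)` with digits `aₙ ∈ {0,1}`. -/
noncomputable def cantorTernarySet : Set ℝ :=
  Set.range fun a : ℕ → Bool => ∑' n : ℕ, (if a n then (2 : ℝ) else 0) / 3 ^ (n + 1)

/-- The Cantor (Cantor–Lebesgue) function on `[0,1]`, defined as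
`y ↦ 𝓗^s([0,y] ∩ K)` with `s = log 2 / log 3`, extended by the identity outside `[0,1]`. -/
noncomputable def cantorFun (y : ℝ) : ℝ :=
  if y ∈ Set.Icc (0 : ℝ) 1 then
    (MeasureTheory.Measure.hausdorffMeasure (Real.log 2 / Real.log 3)
      (cantorTernarySet ∩ Set.Icc 0 y)).toReal
  else y

/-!
Off the Cantor set `K`, which is closed, `cantorFun` is locally constant. Points of `K` are
codings `a : ℕ → Bool` read in base 3 with digits `0, 2`; reading the same coding in base 2 gives a
map `K → [0, 1]` which is `2`-Hölder of exponent `s = log 2 / log 3`, because two codings whose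
first difference is at digit `n` are at least `3^-(n+1)` apart in base 3 and at most `2^-n` apart
in base 2. It maps the level-`n` cylinder around `y ∈ K` onto an interval of length `2^-n`, so that
cylinder has `𝓗^s`-measure at least `2^-(n+1)`, while it lies within `3^-n` of `y`. Hence
`cantorFun` grows by `≥ 2^-(n+1)` across an interval of length `≤ 2 · 3^-n` around `y`, and its
difference quotients at `y` are unbounded. Covering `K` by the `2^n` cylinders of level `n` shows
`𝓗^s(K) ≤ 1`, so that the `toReal` in `cantorFun` loses nothing.
-/

open Set Filter Topology Real
open scoped ENNReal NNReal

theorem Real.ofDigits_mem_Icc_sum {b : ℕ} (d : ℕ → Fin b) (n : ℕ) :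
    ofDigits d ∈ Icc (∑ i ∈ Finset.range n, ofDigitsTerm d i)
      (∑ i ∈ Finset.range n, ofDigitsTerm d i + ((b : ℝ) ^ n)⁻¹) := by
  have hpos : (0 : ℝ) ≤ ((b : ℝ) ^ n)⁻¹ := by positivity
  rw [ofDigits_eq_sum_add_ofDigits d n]
  exact ⟨le_add_of_nonneg_right (mul_nonneg hpos (ofDigits_nonneg _)),
    add_le_add_right (mul_le_of_le_one_right hpos (ofDigits_le_one _)) _⟩

theorem HolderOnWith.of_dist_le {X Y : Type*} [PseudoMetricSpace X] [PseudoMetricSpace Y]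
    {C r : ℝ≥0} {f : X → Y} {s : Set X}
    (h : ∀ x ∈ s, ∀ y ∈ s, dist (f x) (f y) ≤ C * dist x y ^ (r : ℝ)) :
    HolderOnWith C r f s :=
  fun x hx y hy => calc
    edist (f x) (f y) = ENNReal.ofReal (dist (f x) (f y)) := edist_dist _ _
    _ ≤ ENNReal.ofReal (C * dist x y ^ (r : ℝ)) := ENNReal.ofReal_le_ofReal (h x hx y hy)
    _ = C * edist x y ^ (r : ℝ) := by
      rw [ENNReal.ofReal_mul C.coe_nonneg, ENNReal.ofReal_coe_nnreal,
        ← ENNReal.ofReal_rpow_of_nonneg dist_nonneg r.coe_nonneg, edist_dist]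

theorem IsClosed.eventually_inter_Icc_eq {K : Set ℝ} (hK : IsClosed K) {y : ℝ} (hy : y ∉ K)
    (a : ℝ) : ∀ᶠ x in 𝓝 y, K ∩ Icc a x = K ∩ Icc a y := by
  obtain ⟨ε, hε, hball⟩ := Metric.isOpen_iff.mp hK.isOpen_compl y hy
  filter_upwards [Metric.ball_mem_nhds y hε] with x hx
  ext z
  simp only [mem_inter_iff, mem_Icc, and_congr_right_iff]
  intro hz _
  have hzy : ε ≤ |z - y| := by
    by_contra! h
    exact hball (by rwa [Metric.mem_ball, Real.dist_eq]) hz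
  rw [Metric.mem_ball, Real.dist_eq] at hx
  cases abs_cases (z - y) <;> cases abs_cases (x - y) <;> constructor <;> intro <;> linarith

theorem not_differentiableAt_of_forall_eventually_lt {f : ℝ → ℝ} {y : ℝ} {u v : ℕ → ℝ}
    (hu : Tendsto u atTop (𝓝 y)) (hv : Tendsto v atTop (𝓝 y))
    (huy : ∀ n, u n ≤ y) (hyv : ∀ n, y ≤ v n)
    (h : ∀ C, ∀ᶠ n in atTop, C * (v n - u n) < f (v n) - f (u n)) :
    ¬ DifferentiableAt ℝ f y := by
  intro hf
  obtain ⟨C, hC⟩ := hf.hasDerivAt.isBigO_sub.bound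
  obtain ⟨n, hun, hvn, hn⟩ := ((hu.eventually hC).and ((hv.eventually hC).and (h C))).exists
  simp only [Real.norm_eq_abs, abs_of_nonneg (sub_nonneg.2 (hyv n)),
    abs_of_nonpos (sub_nonpos.2 (huy n))] at hun hvn
  linarith [le_abs_self (f (v n) - f y), neg_abs_le (f (u n) - f y)]

theorem inv_three_pow_rpow (n : ℕ) : ((3 : ℝ) ^ n)⁻¹ ^ (log 2 / log 3) = ((2 : ℝ) ^ n)⁻¹ := by
  have h : (3 : ℝ) ^ (log 2 / log 3) = 2 := by
    simpa [Real.logb] using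
      Real.rpow_logb (b := 3) (x := 2) (by norm_num) (by norm_num) (by norm_num)
  rw [inv_rpow (by positivity), ← rpow_natCast, ← rpow_mul (by norm_num), mul_comm,
    rpow_mul (by norm_num), h, rpow_natCast]

theorem eventually_mul_inv_three_pow_lt (C : ℝ) :
    ∀ᶠ n : ℕ in atTop, C * ((3 : ℝ) ^ n)⁻¹ < ((2 : ℝ) ^ n)⁻¹ := by
  filter_upwards [(tendsto_pow_atTop_atTop_of_one_lt
    (by norm_num : (1 : ℝ) < 3 / 2)).eventually_gt_atTop C] with n hn
  calc C * ((3 : ℝ) ^ n)⁻¹ < (3 / 2) ^ n * ((3 : ℝ) ^ n)⁻¹ := by gcongr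
    _ = ((2 : ℝ) ^ n)⁻¹ := by rw [div_pow]; field_simp

namespace Cantor

noncomputable def ternary (a : ℕ → Bool) : ℝ := ofDigits fun i => cond (a i) (2 : Fin 3) 0

noncomputable def binary (a : ℕ → Bool) : ℝ := ofDigits (finTwoEquiv.symm ∘ a)

theorem cantorTernarySet_eq_range_ternary : cantorTernarySet = range ternary := by
  rw [cantorTernarySet]
  congr 1
  funext a
  refine tsum_congr fun n => ?_
  cases h : a n <;> simp [ofDigitsTerm, div_eq_mul_inv, h]

theorem continuous_ternary : Continuous ternary :=
  continuous_ofDigits.comp <| continuous_pi fun i =>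
    (continuous_of_discreteTopology (f := fun x : Bool => cond x (2 : Fin 3) 0)).comp
      (continuous_apply i)

theorem ternary_mem_Icc (a : ℕ → Bool) : ternary a ∈ Icc 0 1 :=
  ⟨ofDigits_nonneg _, ofDigits_le_one _⟩

theorem cantorTernarySet_subset_Icc : cantorTernarySet ⊆ Icc 0 1 := by
  rw [cantorTernarySet_eq_range_ternary]
  exact range_subset_iff.mpr ternary_mem_Icc

theorem isClosed_cantorTernarySet : IsClosed cantorTernarySet := by
  rw [cantorTernarySet_eq_range_ternary]
  exact (isCompact_range continuous_ternary).isClosed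

theorem zero_mem_cantorTernarySet : (0 : ℝ) ∈ cantorTernarySet := by
  rw [cantorTernarySet_eq_range_ternary]
  exact ⟨fun _ => false, by simp [ternary, ofDigits, ofDigitsTerm]⟩

theorem one_mem_cantorTernarySet : (1 : ℝ) ∈ cantorTernarySet := by
  rw [cantorTernarySet_eq_range_ternary]
  exact ⟨fun _ => true, ofDigits_const_last_eq_one 2⟩

theorem inv_three_pow_succ_le_ternary_sub {a b : ℕ → Bool} {n : ℕ}
    (hab : ∀ k < n, a k = b k) (ha : a n = true) (hb : b n = false) :
    ((3 : ℝ) ^ (n + 1))⁻¹ ≤ ternary a - ternary b := by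
  have hprefix : ∑ k ∈ Finset.range n, ofDigitsTerm (fun i => cond (a i) (2 : Fin 3) 0) k =
      ∑ k ∈ Finset.range n, ofDigitsTerm (fun i => cond (b i) (2 : Fin 3) 0) k :=
    Finset.sum_congr rfl fun k hk => by simp only [ofDigitsTerm, hab k (Finset.mem_range.mp hk)]
  have ha' := (ofDigits_mem_Icc_sum (fun i => cond (a i) (2 : Fin 3) 0) (n + 1)).1
  have hb' := (ofDigits_mem_Icc_sum (fun i => cond (b i) (2 : Fin 3) 0) (n + 1)).2
  rw [Finset.sum_range_succ, hprefix] at ha'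
  rw [Finset.sum_range_succ] at hb'
  have hta :
      ofDigitsTerm (fun i => cond (a i) (2 : Fin 3) 0) n = 2 * ((3 : ℝ) ^ (n + 1))⁻¹ := by
    simp [ofDigitsTerm, ha]
  have htb : ofDigitsTerm (fun i => cond (b i) (2 : Fin 3) 0) n = 0 := by
    simp [ofDigitsTerm, hb]
  rw [ternary, ternary]
  linarith

theorem inv_three_pow_succ_firstDiff_le_abs_ternary_sub {a b : ℕ → Bool} (h : a ≠ b) :
    ((3 : ℝ) ^ (PiNat.firstDiff a b + 1))⁻¹ ≤ |ternary a - ternary b| := by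
  have hlt : ∀ k < PiNat.firstDiff a b, a k = b k := fun _ hk =>
    PiNat.apply_eq_of_lt_firstDiff hk
  cases ha : a (PiNat.firstDiff a b) <;> cases hb : b (PiNat.firstDiff a b)
  · exact absurd (ha.trans hb.symm) (PiNat.apply_firstDiff_ne h)
  · rw [abs_sub_comm]
    exact (inv_three_pow_succ_le_ternary_sub (fun k hk => (hlt k hk).symm) hb ha).trans
      (le_abs_self _)
  · exact (inv_three_pow_succ_le_ternary_sub hlt ha hb).trans (le_abs_self _)
  · exact absurd (ha.trans hb.symm) (PiNat.apply_firstDiff_ne h)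

theorem ternary_injective : Function.Injective ternary := fun a b hab => by
  by_contra h
  have := inv_three_pow_succ_firstDiff_le_abs_ternary_sub h
  rw [hab, sub_self, abs_zero] at this
  exact (lt_irrefl 0 ((by positivity : (0 : ℝ) < _).trans_le this))

theorem abs_binary_sub_le (a b : ℕ → Bool) :
    |binary a - binary b| ≤ 2 * |ternary a - ternary b| ^ (log 2 / log 3) := by
  rcases eq_or_ne a b with rfl | h
  · simpa using rpow_nonneg le_rfl _
  calc |binary a - binary b| ≤ ((2 : ℝ) ^ PiNat.firstDiff a b)⁻¹ :=
        mod_cast abs_ofDigits_sub_ofDigits_le fun k hk => by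
          simp [PiNat.apply_eq_of_lt_firstDiff hk]
    _ = 2 * ((3 : ℝ) ^ (PiNat.firstDiff a b + 1))⁻¹ ^ (log 2 / log 3) := by
        rw [inv_three_pow_rpow, pow_succ, mul_inv]
        ring
    _ ≤ 2 * |ternary a - ternary b| ^ (log 2 / log 3) := by
        gcongr
        exact inv_three_pow_succ_firstDiff_le_abs_ternary_sub h

theorem Icc_subset_image_binary_cylinder (a : ℕ → Bool) (n : ℕ) :
    Icc (∑ i ∈ Finset.range n, ofDigitsTerm (finTwoEquiv.symm ∘ a) i)
      (∑ i ∈ Finset.range n, ofDigitsTerm (finTwoEquiv.symm ∘ a) i + ((2 : ℝ) ^ n)⁻¹) ⊆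
      binary '' PiNat.cylinder a n := by
  set t := ∑ i ∈ Finset.range n, ofDigitsTerm (finTwoEquiv.symm ∘ a) i
  intro u ⟨htu, hut⟩
  have h2n : (0 : ℝ) < 2 ^ n := by positivity
  obtain ⟨d, -, hd⟩ := ofDigits_SurjOn (b := 2) one_lt_two
    (show 2 ^ n * (u - t) ∈ Icc 0 1 from
      ⟨by nlinarith, by rw [← mul_inv_cancel₀ h2n.ne']; gcongr; linarith⟩)
  set b : ℕ → Bool := fun k => if k < n then a k else finTwoEquiv (d (k - n))
  have hb : b ∈ PiNat.cylinder a n := fun k hk => if_pos hk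
  refine ⟨b, hb, ?_⟩
  have hprefix : ∑ i ∈ Finset.range n, ofDigitsTerm (finTwoEquiv.symm ∘ b) i = t :=
    Finset.sum_congr rfl fun k hk => by
      simp only [ofDigitsTerm, Function.comp_apply, hb k (Finset.mem_range.mp hk)]
  have hshift : (fun i => (finTwoEquiv.symm ∘ b) (i + n)) = d := by
    funext i
    simp [b]
  rw [binary, ofDigits_eq_sum_add_ofDigits _ n, hprefix, hshift, hd]
  field_simp
  ring

/-- The Cantor function on `range ternary`; elsewhere `invFun` makes its value arbitrary. -/
noncomputable def ternaryToBinary (x : ℝ) : ℝ := binary (Function.invFun ternary x)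

theorem ternaryToBinary_ternary (a : ℕ → Bool) : ternaryToBinary (ternary a) = binary a := by
  rw [ternaryToBinary, Function.leftInverse_invFun ternary_injective a]

noncomputable def cantorDim : ℝ≥0 := ⟨log 2 / log 3, by positivity⟩

theorem coe_cantorDim : (cantorDim : ℝ) = log 2 / log 3 := rfl

theorem cantorDim_pos : 0 < cantorDim := by
  rw [← NNReal.coe_pos, coe_cantorDim]
  positivity

theorem holderOnWith_ternaryToBinary :
    HolderOnWith 2 cantorDim ternaryToBinary (range ternary) := by
  refine HolderOnWith.of_dist_le ?_
  rintro _ ⟨a, rfl⟩ _ ⟨b, rfl⟩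
  rw [ternaryToBinary_ternary, ternaryToBinary_ternary, Real.dist_eq, Real.dist_eq]
  exact abs_binary_sub_le a b

theorem ofReal_inv_two_pow_le_hausdorffMeasure_image_cylinder (a : ℕ → Bool) (n : ℕ) :
    ENNReal.ofReal ((2 : ℝ) ^ n)⁻¹ ≤ 2 * μH[log 2 / log 3] (ternary '' PiNat.cylinder a n) := by
  have hholder :=
    holderOnWith_ternaryToBinary.mono (image_subset_range ternary (PiNat.cylinder a n))
  calc ENNReal.ofReal ((2 : ℝ) ^ n)⁻¹
      = volume (Icc (∑ i ∈ Finset.range n, ofDigitsTerm (finTwoEquiv.symm ∘ a) i)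
          (∑ i ∈ Finset.range n, ofDigitsTerm (finTwoEquiv.symm ∘ a) i +
            ((2 : ℝ) ^ n)⁻¹)) := by
        rw [Real.volume_Icc, add_sub_cancel_left]
    _ ≤ μH[1] (ternaryToBinary '' (ternary '' PiNat.cylinder a n)) := by
        rw [hausdorffMeasure_real, image_image]
        simp only [ternaryToBinary_ternary]
        exact measure_mono (Icc_subset_image_binary_cylinder a n)
    _ ≤ 2 * μH[log 2 / log 3] (ternary '' PiNat.cylinder a n) := by
        simpa only [ENNReal.rpow_one, mul_one, coe_cantorDim, ENNReal.coe_ofNat] using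
          hholder.hausdorffMeasure_image_le cantorDim_pos zero_le_one

theorem hausdorffMeasure_range_ternary_le_one : μH[log 2 / log 3] (range ternary) ≤ 1 := by
  set cover : ∀ n, (Fin n → Bool) → Set ℝ :=
    fun n w => ternary '' {b | ∀ k : Fin n, b k = w k}
  have hdiam : ∀ n w, Metric.ediam (cover n w) ≤ ENNReal.ofReal ((3 : ℝ) ^ n)⁻¹ := fun n w =>
    Metric.ediam_le <| by
      rintro _ ⟨b, hb, rfl⟩ _ ⟨c, hc, rfl⟩
      rw [edist_dist, Real.dist_eq]
      exact ENNReal.ofReal_le_ofReal <| mod_cast abs_ofDigits_sub_ofDigits_le fun k hk => by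
        simp only [hb ⟨k, hk⟩, hc ⟨k, hk⟩]
  have hsum : ∀ n, ∑ w, Metric.ediam (cover n w) ^ (log 2 / log 3) ≤ 1 := fun n => calc
    ∑ w, Metric.ediam (cover n w) ^ (log 2 / log 3)
        ≤ ∑ _w : Fin n → Bool, ENNReal.ofReal ((2 : ℝ) ^ n)⁻¹ := by
      gcongr with w
      rw [← inv_three_pow_rpow, ← ENNReal.ofReal_rpow_of_nonneg (by positivity) (by positivity)]
      exact ENNReal.rpow_le_rpow (hdiam n w) (by positivity)
    _ = 1 := by
      rw [Finset.sum_const, Finset.card_univ, Fintype.card_fun, Fintype.card_bool,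
        Fintype.card_fin, nsmul_eq_mul, ENNReal.ofReal_inv_of_pos (by positivity),
        ENNReal.ofReal_pow zero_le_two]
      simp [ENNReal.mul_inv_cancel]
  have hcover := Measure.hausdorffMeasure_le_liminf_sum (log 2 / log 3) (range ternary)
    (l := atTop) (fun n => ENNReal.ofReal ((3 : ℝ) ^ n)⁻¹)
    (by simpa using (ENNReal.tendsto_ofReal (tendsto_inv_atTop_zero.comp
      (tendsto_pow_atTop_atTop_of_one_lt (by norm_num : (1 : ℝ) < 3)))))
    cover (Eventually.of_forall hdiam)
    (Eventually.of_forall fun n => by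
      rintro _ ⟨a, rfl⟩
      exact mem_iUnion.mpr ⟨fun k => a k, a, fun k => rfl, rfl⟩)
  refine hcover.trans (liminf_le_of_le (by isBoundedDefault) fun b hb => ?_)
  obtain ⟨n, hn⟩ := hb.exists
  exact hn.trans (hsum n)

noncomputable def cantorMeasure : Measure ℝ := μH[log 2 / log 3].restrict cantorTernarySet

instance : IsFiniteMeasure cantorMeasure :=
  isFiniteMeasure_restrict.mpr <| ne_top_of_le_ne_top ENNReal.one_ne_top <| by
    rw [cantorTernarySet_eq_range_ternary]
    exact hausdorffMeasure_range_ternary_le_one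

theorem cantorFun_eq_measureReal {y : ℝ} (hy : y ∈ Icc 0 1) :
    cantorFun y = cantorMeasure.real (Icc 0 y) := by
  rw [cantorFun, if_pos hy, measureReal_def, cantorMeasure,
    Measure.restrict_apply measurableSet_Icc, inter_comm]

theorem cantorFun_sub_cantorFun {u v : ℝ} (hu : 0 ≤ u) (huv : u ≤ v) (hv : v ≤ 1) :
    cantorFun v - cantorFun u = cantorMeasure.real (Icc u v) := by
  have : NullSingletonClass (μH[log 2 / log 3] : Measure ℝ) :=
    Measure.nullSingletonClass_hausdorff ℝ (by positivity)
  rw [cantorFun_eq_measureReal ⟨hu.trans huv, hv⟩, cantorFun_eq_measureReal ⟨hu, huv.trans hv⟩,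
    ← Icc_union_Ioc_eq_Icc hu huv,
    measureReal_union ((Iic_disjoint_Ioc le_rfl).mono_left Icc_subset_Iic_self)
      measurableSet_Ioc,
    add_sub_cancel_left, cantorMeasure, measureReal_congr Ioc_ae_eq_Icc]

theorem inv_two_pow_le_cantorFun_sub {y : ℝ} (hy : y ∈ cantorTernarySet) (n : ℕ) :
    ((2 : ℝ) ^ n)⁻¹ ≤ 2 * (cantorFun (min 1 (y + ((3 : ℝ) ^ n)⁻¹)) -
      cantorFun (max 0 (y - ((3 : ℝ) ^ n)⁻¹))) := by
  rw [cantorTernarySet_eq_range_ternary] at hy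
  obtain ⟨a, rfl⟩ := hy
  have hr : (0 : ℝ) < ((3 : ℝ) ^ n)⁻¹ := by positivity
  have hcyl : ternary '' PiNat.cylinder a n ⊆
      Icc (max 0 (ternary a - ((3 : ℝ) ^ n)⁻¹)) (min 1 (ternary a + ((3 : ℝ) ^ n)⁻¹)) := by
    rintro _ ⟨b, hb, rfl⟩
    have hba : |ternary b - ternary a| ≤ ((3 : ℝ) ^ n)⁻¹ :=
      mod_cast abs_ofDigits_sub_ofDigits_le fun k hk => by simp only [hb k hk]
    rw [abs_le] at hba
    exact ⟨max_le (ternary_mem_Icc b).1 (by linarith),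
      le_min (ternary_mem_Icc b).2 (by linarith)⟩
  have hmeasure :
      ENNReal.ofReal ((2 : ℝ) ^ n)⁻¹ ≤ 2 * cantorMeasure (ternary '' PiNat.cylinder a n) := by
    rw [cantorMeasure, Measure.restrict_eq_self]
    · exact ofReal_inv_two_pow_le_hausdorffMeasure_image_cylinder a n
    · rw [cantorTernarySet_eq_range_ternary]
      exact image_subset_range _ _
  obtain ⟨ha0, ha1⟩ := ternary_mem_Icc a
  rw [cantorFun_sub_cantorFun (le_max_left _ _)
    ((max_le ha0 (by linarith)).trans (le_min ha1 (by linarith))) (min_le_left _ _)]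
  calc ((2 : ℝ) ^ n)⁻¹ ≤ 2 * cantorMeasure.real (ternary '' PiNat.cylinder a n) := by
        rw [measureReal_def, ← ENNReal.toReal_ofNat, ← ENNReal.toReal_mul]
        exact (ENNReal.ofReal_le_iff_le_toReal (by finiteness)).mp hmeasure
    _ ≤ 2 * cantorMeasure.real _ :=
        mul_le_mul_of_nonneg_left (measureReal_mono hcyl) zero_le_two

theorem cantorFun_eventuallyEq_of_notMem {y : ℝ} (hy : y ∈ Icc 0 1 \ cantorTernarySet) :
    cantorFun =ᶠ[𝓝 y] fun _ => cantorFun y := by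
  obtain ⟨⟨hy0, hy1⟩, hyK⟩ := hy
  have hy0 : 0 < y := hy0.lt_of_ne fun h => hyK (h ▸ zero_mem_cantorTernarySet)
  have hy1 : y < 1 := hy1.lt_of_ne fun h => hyK (h ▸ one_mem_cantorTernarySet)
  filter_upwards [Icc_mem_nhds hy0 hy1, isClosed_cantorTernarySet.eventually_inter_Icc_eq hyK 0]
    with x hx hKx
  rw [cantorFun, cantorFun, if_pos hx, if_pos ⟨hy0.le, hy1.le⟩, hKx]

theorem hasDerivAt_cantorFun_of_notMem {y : ℝ} (hy : y ∈ Icc 0 1 \ cantorTernarySet) :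
    HasDerivAt cantorFun 0 y :=
  (hasDerivAt_const y (cantorFun y)).congr_of_eventuallyEq
    (cantorFun_eventuallyEq_of_notMem hy)

theorem eventually_mul_sub_lt_cantorFun_sub {y : ℝ} (hy : y ∈ cantorTernarySet) (C : ℝ) :
    ∀ᶠ n : ℕ in atTop,
      C * (min 1 (y + ((3 : ℝ) ^ n)⁻¹) - max 0 (y - ((3 : ℝ) ^ n)⁻¹)) <
        cantorFun (min 1 (y + ((3 : ℝ) ^ n)⁻¹)) -
          cantorFun (max 0 (y - ((3 : ℝ) ^ n)⁻¹)) := by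
  obtain ⟨hy0, hy1⟩ := cantorTernarySet_subset_Icc hy
  filter_upwards [eventually_mul_inv_three_pow_lt (4 * |C|)] with n hn
  set r := ((3 : ℝ) ^ n)⁻¹
  have hr : 0 < r := by positivity
  have hlen : min 1 (y + r) - max 0 (y - r) ≤ 2 * r := by
    linarith [min_le_right 1 (y + r), le_max_right 0 (y - r)]
  have hlen_nonneg : 0 ≤ min 1 (y + r) - max 0 (y - r) :=
    sub_nonneg.2 ((max_le hy0 (by linarith)).trans (le_min hy1 (by linarith)))
  calc C * (min 1 (y + r) - max 0 (y - r)) ≤ |C| * (min 1 (y + r) - max 0 (y - r)) :=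
        mul_le_mul_of_nonneg_right (le_abs_self C) hlen_nonneg
    _ ≤ |C| * (2 * r) := mul_le_mul_of_nonneg_left hlen (abs_nonneg C)
    _ < cantorFun (min 1 (y + r)) - cantorFun (max 0 (y - r)) := by
        linarith [inv_two_pow_le_cantorFun_sub hy n]

theorem not_differentiableAt_cantorFun {y : ℝ} (hy : y ∈ cantorTernarySet) :
    ¬ DifferentiableAt ℝ cantorFun y := by
  obtain ⟨hy0, hy1⟩ := cantorTernarySet_subset_Icc hy
  have hr : Tendsto (fun n : ℕ => ((3 : ℝ) ^ n)⁻¹) atTop (𝓝 0) := tendsto_inv_atTop_zero.comp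
    (tendsto_pow_atTop_atTop_of_one_lt (by norm_num : (1 : ℝ) < 3))
  refine not_differentiableAt_of_forall_eventually_lt ?_ ?_ (fun n => max_le hy0 (by simp))
    (fun n => le_min hy1 (by simp)) (eventually_mul_sub_lt_cantorFun_sub hy)
  · simpa [max_eq_right hy0] using
      (tendsto_const_nhds (x := (0 : ℝ))).max ((tendsto_const_nhds (x := y)).sub hr)
  · simpa [min_eq_right hy1] using
      (tendsto_const_nhds (x := (1 : ℝ))).min ((tendsto_const_nhds (x := y)).add hr)

end Cantor

open Cantor

theorem stmt10 :
    (∀ y ∈ Set.Icc (0 : ℝ) 1 \ cantorTernarySet, HasDerivAt cantorFun 0 y) ∧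
      ∀ y ∈ cantorTernarySet, ¬ DifferentiableAt ℝ cantorFun y :=
  ⟨fun _ => hasDerivAt_cantorFun_of_notMem, fun _ => not_differentiableAt_cantorFun⟩
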